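/- arXiv:2107.03140 — 4 statements merged into one kernel-verified Lean document; each statement's English description precedes it below -/
import Mathlib

section
/- Let S be a finite set of lines in the plane and let o, g be two points not on any line of S. A continuous path from o to g avoiding all lines in a subset S \ S' exists if and only if S' contains every line of S that strictly separates o and g. Consequently, the minimum constraint removal set for line obstacles is exactly the set of lines separating o and g. -/
open scoped Classical

/-- MCR for lines: a path from `o` to `g` avoiding all lines in `S \ S'` exists
iff `S'` contains every line of `S` that strictly separates `o` and `g`. -/
theorem mcr_lines_characterization
    (S S' : Finset ((ℝ × ℝ →ₗ[ℝ] ℝ) × ℝ))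
    (hS' : S' ⊆ S)
    (hnz : ∀ ℓ ∈ S, ℓ.1 ≠ 0)
    (o g : ℝ × ℝ)
    (ho : ∀ ℓ ∈ S, ℓ.1 o ≠ ℓ.2)
    (hg : ∀ ℓ ∈ S, ℓ.1 g ≠ ℓ.2) :
    (∃ γ : ℝ → ℝ × ℝ, ContinuousOn γ (Set.Icc 0 1) ∧ γ 0 = o ∧ γ 1 = g ∧
        ∀ ℓ ∈ S \ S', ∀ t ∈ Set.Icc (0:ℝ) 1, ℓ.1 (γ t) ≠ ℓ.2) ↔
      (∀ ℓ ∈ S, ((ℓ.1 o < ℓ.2 ∧ ℓ.2 < ℓ.1 g) ∨ (ℓ.1 g < ℓ.2 ∧ ℓ.2 < ℓ.1 o)) → ℓ ∈ S') := by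
  constructor
  · rintro ⟨γ, hγc, hγ0, hγ1, hγav⟩ ℓ hℓ hsep
    by_contra hℓ'
    have hmem : ℓ ∈ S \ S' := Finset.mem_sdiff.mpr ⟨hℓ, hℓ'⟩
    have hcont : ContinuousOn (fun t => ℓ.1 (γ t)) (Set.Icc (0:ℝ) 1) :=
      ℓ.1.continuous_of_finiteDimensional.comp_continuousOn hγc
    rcases hsep with ⟨h1, h2⟩ | ⟨h1, h2⟩
    · have hiv := intermediate_value_Icc (by norm_num : (0:ℝ) ≤ 1) hcont
      have hmem2 : ℓ.2 ∈ Set.Icc (ℓ.1 (γ 0)) (ℓ.1 (γ 1)) := by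
        rw [hγ0, hγ1]; exact ⟨h1.le, h2.le⟩
      obtain ⟨t, ht, hteq⟩ := hiv hmem2
      exact hγav ℓ hmem t ht hteq
    · have hiv := intermediate_value_Icc' (by norm_num : (0:ℝ) ≤ 1) hcont
      have hmem2 : ℓ.2 ∈ Set.Icc (ℓ.1 (γ 1)) (ℓ.1 (γ 0)) := by
        rw [hγ0, hγ1]; exact ⟨h1.le, h2.le⟩
      obtain ⟨t, ht, hteq⟩ := hiv hmem2
      exact hγav ℓ hmem t ht hteq
  · intro h
    refine ⟨fun t => (1 - t) • o + t • g, ?_, by simp, by simp, ?_⟩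
    · exact Continuous.continuousOn (by continuity)
    · intro ℓ hℓ t ht
      obtain ⟨hℓS, hℓS'⟩ := Finset.mem_sdiff.mp hℓ
      have heval : ℓ.1 ((1 - t) • o + t • g) = (1 - t) * ℓ.1 o + t * ℓ.1 g := by
        simp [map_add, map_smul, smul_eq_mul]
      rw [heval]
      rcases lt_or_gt_of_ne (ho ℓ hℓS) with h1 | h1 <;>
        rcases lt_or_gt_of_ne (hg ℓ hℓS) with h2 | h2
      · rcases eq_or_lt_of_le ht.1 with h0 | h0
        · intro hc; rw [← h0] at hc; simp at hc; exact absurd hc h1.ne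
        · intro hc
          nlinarith [mul_le_mul_of_nonneg_left h1.le (sub_nonneg.mpr ht.2),
            (mul_lt_mul_iff_right₀ h0).mpr h2]
      · exact absurd (h ℓ hℓS (Or.inl ⟨h1, h2⟩)) hℓS'
      · exact absurd (h ℓ hℓS (Or.inr ⟨h2, h1⟩)) hℓS'
      · rcases eq_or_lt_of_le ht.1 with h0 | h0
        · intro hc; rw [← h0] at hc; simp at hc; exact absurd hc h1.ne'
        · intro hc
          nlinarith [mul_le_mul_of_nonneg_left h1.le (sub_nonneg.mpr ht.2),
            (mul_lt_mul_iff_right₀ h0).mpr h2]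
end

section
/- Subset-sum extraction from the reduction: Let a : Fin n → ℕ, M = 1 + ∑ i, a i, and t ≤ ∑ i, a i. If there exist z ∈ ℕ and a finite multiset (or function counting crossings) such that a path's cost equals n·M + t, where the cost is z·M + ∑_{i ∈ A'} a i for some A' ⊆ Fin n and z ≥ n, then z = n and ∑_{i ∈ A'} a i = t. Hence a solution path of cost exactly n·M + t yields a subset A' of Fin n with ∑_{i ∈ A'} a i = t. -/
/-- Subset-sum extraction: a path cost of exactly `n*M + t` with `z ≥ n` heavy
crossings forces `z = n` and the light part to sum to `t`. -/
theorem subset_sum_extraction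
    (n : ℕ) (a : Fin n → ℕ) (M : ℕ) (hM : M = 1 + ∑ i, a i)
    (t : ℕ) (ht : t ≤ ∑ i, a i)
    (z : ℕ) (hz : n ≤ z) (A' : Finset (Fin n))
    (h : z * M + ∑ i ∈ A', a i = n * M + t) :
    z = n ∧ ∑ i ∈ A', a i = t := by
  have hs : ∑ i ∈ A', a i ≤ ∑ i, a i :=
    Finset.sum_le_sum_of_subset (Finset.subset_univ A')
  have hzn : z = n := by
    by_contra hne
    have h1 : n + 1 ≤ z := lt_of_le_of_ne hz (Ne.symm hne)
    have h2 : n * M + M ≤ z * M := by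
      calc n * M + M = (n + 1) * M := by ring
        _ ≤ z * M := Nat.mul_le_mul_right M h1
    omega
  constructor
  · exact hzn
  · subst hzn; omega
end

section
/- Conversely, given a : Fin n → ℕ, M = 1 + ∑ i a i, and A' ⊆ Fin n with ∑_{i ∈ A'} a i = t, the quantity n·M + ∑_{i ∈ A'} a i equals n·M + t. Combined with the forward direction: there exists A' ⊆ Fin n with ∑_{i ∈ A'} a i = t if and only if there exist z ≥ n in ℕ and A' ⊆ Fin n with z·M + ∑_{i ∈ A'} a i = n·M + t. -/
/-- The MCR-EWLS instance has a solution of cost `n*M + t` iff the Subset Sum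
instance `(a, t)` is solvable. -/
theorem subset_sum_iff_cost
    (n : ℕ) (a : Fin n → ℕ) (M t : ℕ)
    (hM : M = 1 + ∑ i, a i) (ht : t ≤ ∑ i, a i) :
    (∃ A' : Finset (Fin n), ∑ i ∈ A', a i = t) ↔
      (∃ z : ℕ, n ≤ z ∧ ∃ A' : Finset (Fin n), z * M + ∑ i ∈ A', a i = n * M + t) := by
  constructor
  · rintro ⟨A', hA'⟩
    exact ⟨n, le_refl n, A', by rw [hA']⟩
  · rintro ⟨z, hz, A', hA'⟩
    have hS : ∑ i ∈ A', a i ≤ ∑ i, a i :=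
      Finset.sum_le_sum_of_subset (Finset.subset_univ A')
    have hSM : ∑ i ∈ A', a i < M := by omega
    have htM : t < M := by omega
    have hzn : z = n := by
      rcases lt_or_ge z (n + 1) with h | h
      · omega
      · exfalso
        have hle : (n + 1) * M ≤ z * M := Nat.mul_le_mul_right M h
        have e : (n + 1) * M = n * M + M := by ring
        rw [e] at hle
        omega
    subst hzn
    exact ⟨A', by omega⟩
end

section
/- If every path from o to g must touch obstacles of total weight at least n·M (from the mandatory lines) and additionally some subset A' ⊆ Fin n of segments, and the minimum achievable total is n·M + min{∑_{i∈A'} a i : A' realizable}, then deciding whether the minimum equals n·M + t for given t is at least as hard as Subset Sum, provided every subset A' ⊆ Fin n is realizable by some path. In the staircase construction of the paper, every subset A' ⊆ Fin n is realizable: for each A' there is a path from o to g crossing each vertical line exactly once and crossing exactly the segments in A'. (Discrete version: in the grid graph of the staircase arrangement with n horizontal segments s₁,...,sₙ attached to the right wall at increasing heights and vertical lines l₁,...,lₙ through their left endpoints, for every A' ⊆ Fin n there is a path from s to t in the arrangement graph whose union of covers is exactly {lᵢ : i ∈ Fin n} ∪ {sᵢ : i ∈ A'}.) -/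
open scoped Classical

/-- The staircase arrangement grid graph: cells `(i, j)` (column `i`, row `j`),
adjacent when they differ by one in exactly one coordinate. -/
def staircaseGraph (n : ℕ) : SimpleGraph (Fin (n + 1) × Fin (n + 1)) where
  Adj u v :=
    (u.2 = v.2 ∧ (u.1.val + 1 = v.1.val ∨ v.1.val + 1 = u.1.val)) ∨
    (u.1 = v.1 ∧ (u.2.val + 1 = v.2.val ∨ v.2.val + 1 = u.2.val))
  symm := by
    constructor
    rintro u v (⟨h, h'⟩ | ⟨h, h'⟩)
    · exact Or.inl ⟨h.symm, h'.symm⟩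
    · exact Or.inr ⟨h.symm, h'.symm⟩
  loopless := by
    constructor
    rintro u (⟨-, h | h⟩ | ⟨-, h | h⟩) <;> omega

/-- Obstacles crossed by a single step of the walk: moving between columns `i` and
`i+1` crosses line `lᵢ` (`Sum.inl i`); moving between rows `j` and `j+1` in a
column `≥ j+1` crosses segment `sⱼ` (`Sum.inr j`). -/
noncomputable def stepCrossed (n : ℕ) (d : (Fin (n + 1) × Fin (n + 1)) × (Fin (n + 1) × Fin (n + 1))) :
    Finset (Fin n ⊕ Fin n) :=
  Finset.univ.filter fun x =>
    match x with
    | Sum.inl i => d.1.2 = d.2.2 ∧ min d.1.1.val d.2.1.val = i.val ∧ d.1.1 ≠ d.2.1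
    | Sum.inr j => d.1.1 = d.2.1 ∧ min d.1.2.val d.2.2.val = j.val ∧ d.1.2 ≠ d.2.2 ∧
        j.val + 1 ≤ d.1.1.val

/-- The set of obstacles crossed by a walk in the staircase arrangement. -/
noncomputable def walkCrossed {n : ℕ} {u v : Fin (n + 1) × Fin (n + 1)}
    (p : (staircaseGraph n).Walk u v) : Finset (Fin n ⊕ Fin n) :=
  Finset.univ.filter fun x => ∃ d ∈ p.darts, x ∈ stepCrossed n d.toProd

section Aux

variable {n : ℕ}

lemma mem_stepCrossed_inl {i : Fin n} {d : (Fin (n + 1) × Fin (n + 1)) × (Fin (n + 1) × Fin (n + 1))} :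
    Sum.inl i ∈ stepCrossed n d ↔
      d.1.2 = d.2.2 ∧ min d.1.1.val d.2.1.val = i.val ∧ d.1.1 ≠ d.2.1 := by
  simp [stepCrossed]

lemma mem_stepCrossed_inr {j : Fin n} {d : (Fin (n + 1) × Fin (n + 1)) × (Fin (n + 1) × (Fin (n + 1)))} :
    Sum.inr j ∈ stepCrossed n d ↔
      d.1.1 = d.2.1 ∧ min d.1.2.val d.2.2.val = j.val ∧ d.1.2 ≠ d.2.2 ∧
        j.val + 1 ≤ d.1.1.val := by
  simp [stepCrossed]

lemma mem_walkCrossed {u v : Fin (n + 1) × Fin (n + 1)} (p : (staircaseGraph n).Walk u v)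
    (x : Fin n ⊕ Fin n) :
    x ∈ walkCrossed p ↔ ∃ d ∈ p.darts, x ∈ stepCrossed n d.toProd := by
  simp [walkCrossed]

lemma adj_left (n : ℕ) (r : Fin (n + 1)) (i : ℕ) (h : i < n) :
    (staircaseGraph n).Adj (⟨i + 1, by omega⟩, r) (⟨i, by omega⟩, r) :=
  Or.inl ⟨rfl, Or.inr rfl⟩

lemma adj_up (n : ℕ) (c : Fin (n + 1)) (j : ℕ) (h : j < n) :
    (staircaseGraph n).Adj (c, ⟨j, by omega⟩) (c, ⟨j + 1, by omega⟩) :=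
  Or.inr ⟨rfl, Or.inl rfl⟩

lemma stepCrossed_swap (a b : Fin (n + 1) × Fin (n + 1)) (x : Fin n ⊕ Fin n) :
    x ∈ stepCrossed n (b, a) ↔ x ∈ stepCrossed n (a, b) := by
  rcases x with i | j
  · rw [mem_stepCrossed_inl, mem_stepCrossed_inl]
    constructor <;> rintro ⟨h1, h2, h3⟩ <;>
      exact ⟨h1.symm, by rw [min_comm]; exact h2, h3.symm⟩
  · rw [mem_stepCrossed_inr, mem_stepCrossed_inr]
    constructor <;> rintro ⟨h1, h2, h3, h4⟩ <;>
      exact ⟨h1.symm, by rw [min_comm]; exact h2, h3.symm, h1 ▸ h4⟩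

lemma walkCrossed_reverse {u v : Fin (n + 1) × Fin (n + 1)} (p : (staircaseGraph n).Walk u v)
    (x : Fin n ⊕ Fin n) : x ∈ walkCrossed p.reverse ↔ x ∈ walkCrossed p := by
  rw [mem_walkCrossed, mem_walkCrossed]
  constructor
  · rintro ⟨d, hd, hx⟩
    rw [SimpleGraph.Walk.darts_reverse, List.mem_reverse, List.mem_map] at hd
    obtain ⟨e, he, rfl⟩ := hd
    refine ⟨e, he, ?_⟩
    rwa [show e.symm.toProd = (e.toProd.2, e.toProd.1) from rfl, stepCrossed_swap] at hx
  · rintro ⟨d, hd, hx⟩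
    refine ⟨d.symm, ?_, ?_⟩
    · rw [SimpleGraph.Walk.darts_reverse, List.mem_reverse, List.mem_map]
      exact ⟨d, hd, rfl⟩
    · rwa [show d.symm.toProd = (d.toProd.2, d.toProd.1) from rfl, stepCrossed_swap]

lemma walkCrossed_append {u v w : Fin (n + 1) × Fin (n + 1)} (p : (staircaseGraph n).Walk u v)
    (q : (staircaseGraph n).Walk v w) (x : Fin n ⊕ Fin n) :
    x ∈ walkCrossed (p.append q) ↔ x ∈ walkCrossed p ∨ x ∈ walkCrossed q := by
  simp only [mem_walkCrossed, SimpleGraph.Walk.darts_append, List.mem_append]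
  constructor
  · rintro ⟨d, hd | hd, hx⟩
    · exact Or.inl ⟨d, hd, hx⟩
    · exact Or.inr ⟨d, hd, hx⟩
  · rintro (⟨d, hd, hx⟩ | ⟨d, hd, hx⟩)
    · exact ⟨d, Or.inl hd, hx⟩
    · exact ⟨d, Or.inr hd, hx⟩

/-- Every walk that starts strictly to the right of line `i` and ends at or left
of it crosses line `i`. -/
lemma lines_crossed {u v : Fin (n + 1) × Fin (n + 1)} (p : (staircaseGraph n).Walk u v) :
    ∀ i : Fin n, i.val < u.1.val → v.1.val ≤ i.val →
      ∃ d ∈ p.darts, Sum.inl i ∈ stepCrossed n d.toProd := by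
  induction p with
  | nil => intro i h1 h2; omega
  | @cons u w v h q ih =>
    intro i h1 h2
    by_cases hw : w.1.val ≤ i.val
    · refine ⟨⟨(u, w), h⟩, List.mem_cons_self, ?_⟩
      rcases h with ⟨he, hc⟩ | ⟨he, hc⟩
      · rw [mem_stepCrossed_inl]
        dsimp only
        refine ⟨he, by omega, fun hh => ?_⟩
        have := congrArg Fin.val hh
        omega
      · rw [he] at h1; omega
    · obtain ⟨d, hd, hx⟩ := ih i (by omega) h2
      exact ⟨d, List.mem_cons_of_mem _ hd, hx⟩

/-- Walk moving left along row `r` from column `i` to column `0`. -/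
def goLeft (n : ℕ) (r : Fin (n + 1)) : (i : ℕ) → (h : i ≤ n) →
    (staircaseGraph n).Walk (⟨i, Nat.lt_succ_of_le h⟩, r) (⟨0, Nat.succ_pos n⟩, r)
  | 0, _ => SimpleGraph.Walk.nil
  | i + 1, h =>
    SimpleGraph.Walk.cons (adj_left n r i h) (goLeft n r i (Nat.le_of_succ_le h))

lemma goLeft_crossed (r : Fin (n + 1)) (i : ℕ) (h : i ≤ n) (x : Fin n ⊕ Fin n) :
    x ∈ walkCrossed (goLeft n r i h) ↔ ∃ k : Fin n, k.val < i ∧ x = Sum.inl k := by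
  induction i with
  | zero =>
    rw [mem_walkCrossed]
    simp [goLeft]
  | succ i ih =>
    rw [mem_walkCrossed]
    simp only [goLeft, SimpleGraph.Walk.darts_cons, List.mem_cons]
    constructor
    · rintro ⟨d, rfl | hd, hx⟩
      · rcases x with k | k
        · rw [mem_stepCrossed_inl] at hx
          dsimp only at hx
          refine ⟨k, ?_, rfl⟩
          omega
        · rw [mem_stepCrossed_inr] at hx
          dsimp only at hx
          exfalso
          have := congrArg Fin.val hx.1
          simp at this
      · obtain ⟨k, hk, rfl⟩ := (ih (Nat.le_of_succ_le h)).mp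
          ((mem_walkCrossed _ _).mpr ⟨d, hd, hx⟩)
        exact ⟨k, by omega, rfl⟩
    · rintro ⟨k, hk, rfl⟩
      by_cases hki : k.val < i
      · obtain ⟨d, hd, hx⟩ := (mem_walkCrossed _ _).mp
          ((ih (Nat.le_of_succ_le h)).mpr ⟨k, hki, rfl⟩)
        exact ⟨d, Or.inr hd, hx⟩
      · have hk' : k.val = i := by omega
        refine ⟨_, Or.inl rfl, ?_⟩
        rw [mem_stepCrossed_inl]
        dsimp only
        refine ⟨rfl, by omega, fun hh => ?_⟩
        have := congrArg Fin.val hh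
        simp at this

/-- Walk moving up column `c` from row `0` to row `j`. -/
def goUp (n : ℕ) (c : Fin (n + 1)) : (j : ℕ) → (h : j ≤ n) →
    (staircaseGraph n).Walk (c, ⟨0, Nat.succ_pos n⟩) (c, ⟨j, Nat.lt_succ_of_le h⟩)
  | 0, _ => SimpleGraph.Walk.nil
  | j + 1, h =>
    (goUp n c j (Nat.le_of_succ_le h)).concat (adj_up n c j h)

lemma goUp_zero_crossed (j : ℕ) (h : j ≤ n) (x : Fin n ⊕ Fin n) :
    x ∉ walkCrossed (goUp n ⟨0, Nat.succ_pos n⟩ j h) := by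
  induction j with
  | zero => rw [mem_walkCrossed]; simp [goUp]
  | succ j ih =>
    rw [mem_walkCrossed]
    simp only [goUp, SimpleGraph.Walk.darts_concat, List.concat_eq_append,
      List.mem_append, List.mem_singleton]
    rintro ⟨d, hd | rfl, hx⟩
    · exact ih (Nat.le_of_succ_le h) ((mem_walkCrossed _ _).mpr ⟨d, hd, hx⟩)
    · rcases x with k | k
      · rw [mem_stepCrossed_inl] at hx
        exact hx.2.2 rfl
      · rw [mem_stepCrossed_inr] at hx
        dsimp only at hx
        have := hx.2.2.2
        simp at this

end Aux

section Loop

variable {n : ℕ}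

/-- The single-step walk crossing exactly segment `j`. -/
def crossStep (j : Fin n) :
    (staircaseGraph n).Walk ((⟨j.val + 1, by omega⟩ : Fin (n + 1)), ⟨j.val, by omega⟩)
      ((⟨j.val + 1, by omega⟩ : Fin (n + 1)), ⟨j.val + 1, by omega⟩) :=
  SimpleGraph.Walk.cons (adj_up n ⟨j.val + 1, by omega⟩ j.val j.isLt) SimpleGraph.Walk.nil

/-- The loop based at the leftmost cell crossing segment `j` (and some lines). -/
def segLoop (j : Fin n) :
    (staircaseGraph n).Walk ((⟨0, by omega⟩ : Fin (n + 1)), ⟨0, by omega⟩)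
      ((⟨0, by omega⟩ : Fin (n + 1)), ⟨0, by omega⟩) :=
  ((goUp n ⟨0, by omega⟩ j.val (by omega)).append
    (((goLeft n ⟨j.val, by omega⟩ (j.val + 1) (by omega)).reverse.append
      (crossStep j)).append
      ((goLeft n ⟨j.val + 1, by omega⟩ (j.val + 1) (by omega)).append
        (goUp n ⟨0, by omega⟩ (j.val + 1) (by omega)).reverse)))

lemma segLoop_crossed (j : Fin n) (x : Fin n ⊕ Fin n) :
    x ∈ walkCrossed (segLoop j) ↔
      (∃ k : Fin n, k.val ≤ j.val ∧ x = Sum.inl k) ∨ x = Sum.inr j := by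
  have hcs : ∀ y : Fin n ⊕ Fin n, y ∈ walkCrossed (crossStep j) ↔ y = Sum.inr j := by
    intro y
    rw [mem_walkCrossed]
    simp only [crossStep, SimpleGraph.Walk.darts_cons, SimpleGraph.Walk.darts_nil,
      List.mem_cons, List.not_mem_nil, or_false, List.mem_singleton]
    constructor
    · rintro ⟨d, rfl, hx⟩
      rcases y with k | k
      · rw [mem_stepCrossed_inl] at hx
        exact absurd rfl hx.2.2
      · rw [mem_stepCrossed_inr] at hx
        have h2 := hx.2.1
        simp at h2
        have : k = j := Fin.ext (by omega)
        rw [this]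
    · rintro rfl
      refine ⟨_, rfl, ?_⟩
      rw [mem_stepCrossed_inr]
      refine ⟨rfl, by simp, ?_, by simp⟩
      intro hh
      have := congrArg Fin.val hh
      simp at this
  simp only [segLoop, walkCrossed_append, walkCrossed_reverse, hcs, goLeft_crossed]
  constructor
  · rintro (h | ((⟨k, hk, hxk⟩ | hx) | (⟨k, hk, hxk⟩ | h)))
    · exact absurd h (goUp_zero_crossed _ _ _)
    · exact Or.inl ⟨k, by omega, hxk⟩
    · exact Or.inr hx
    · exact Or.inl ⟨k, by omega, hxk⟩
    · exact absurd h (goUp_zero_crossed _ _ _)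
  · rintro (⟨k, hk, hxk⟩ | hx)
    · exact Or.inr (Or.inr (Or.inl ⟨k, by omega, hxk⟩))
    · exact Or.inr (Or.inl (Or.inr hx))

/-- Concatenation of the loops for a list of segments. -/
def loopsWalk : List (Fin n) →
    (staircaseGraph n).Walk ((⟨0, Nat.succ_pos n⟩ : Fin (n + 1)), ⟨0, Nat.succ_pos n⟩)
      ((⟨0, Nat.succ_pos n⟩ : Fin (n + 1)), ⟨0, Nat.succ_pos n⟩)
  | [] => SimpleGraph.Walk.nil
  | j :: l => (segLoop j).append (loopsWalk l)

lemma loopsWalk_crossed (l : List (Fin n)) (x : Fin n ⊕ Fin n) :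
    x ∈ walkCrossed (loopsWalk l) ↔ ∃ j ∈ l, x ∈ walkCrossed (segLoop j) := by
  induction l with
  | nil =>
    rw [mem_walkCrossed]
    simp [loopsWalk]
  | cons j l ih =>
    simp only [loopsWalk, walkCrossed_append, ih, List.mem_cons]
    constructor
    · rintro (h | ⟨j', hj', h⟩)
      · exact ⟨j, Or.inl rfl, h⟩
      · exact ⟨j', Or.inr hj', h⟩
    · rintro ⟨j', rfl | hj', h⟩
      · exact Or.inl h
      · exact Or.inr ⟨j', hj', h⟩

end Loop

/-- Staircase realizability: the sets of obstacles crossed by walks from the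
bottom-right cell to the leftmost cell are exactly the sets containing all the
lines (together with an arbitrary subset of the segments). -/
theorem staircase_realizable (n : ℕ) (A : Finset (Fin n ⊕ Fin n)) :
    (∃ p : (staircaseGraph n).Walk (⟨n, Nat.lt_succ_self n⟩, ⟨0, Nat.succ_pos n⟩)
        (⟨0, Nat.succ_pos n⟩, ⟨0, Nat.succ_pos n⟩), walkCrossed p = A) ↔
      ∀ i : Fin n, Sum.inl i ∈ A := by
  constructor
  · rintro ⟨p, rfl⟩ i
    rw [mem_walkCrossed]
    exact lines_crossed p i i.isLt (by simp)
  · intro hA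
    set S : List (Fin n) := (Finset.univ.filter fun j : Fin n => Sum.inr j ∈ A).toList with hS
    refine ⟨(goLeft n ⟨0, Nat.succ_pos n⟩ n le_rfl).append (loopsWalk S), ?_⟩
    ext x
    rw [walkCrossed_append, goLeft_crossed, loopsWalk_crossed]
    constructor
    · rintro (⟨k, hk, rfl⟩ | ⟨j, hj, hx⟩)
      · exact hA k
      · rw [segLoop_crossed] at hx
        rcases hx with ⟨k, hk, rfl⟩ | rfl
        · exact hA k
        · have : j ∈ Finset.univ.filter fun j : Fin n => Sum.inr j ∈ A := by
            rwa [← Finset.mem_toList]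
          simp only [Finset.mem_filter] at this
          exact this.2
    · intro hx
      rcases x with i | j
      · exact Or.inl ⟨i, i.isLt, rfl⟩
      · refine Or.inr ⟨j, ?_, ?_⟩
        · rw [hS, Finset.mem_toList]
          simp [hx]
        · rw [segLoop_crossed]
          exact Or.inr rfl
end
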